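/- arXiv:2010.08077 — 2 statements merged into one kernel-verified Lean document; each statement's English description precedes it below -/
import Mathlib

section
/- The trigonometric Fay identity holds: for the function Φ(z,u) = coth(z) + coth(u), one has Φ(z,u₁)Φ(w,u₂) = Φ(z,u₁−u₂)Φ(z+w,u₂) + Φ(w,u₂−u₁)Φ(z+w,u₁), whenever all arguments have nonvanishing sinh. -/
open Complex

/-! Clearing denominators turns the identity into a polynomial identity among products of
four `sinh`s, and writing `sinh x = (exp x - exp (-x)) / 2` makes that a Laurent polynomial
identity in `exp z`, `exp w`, `exp u₁`, `exp u₂`. -/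

theorem sinh_fay_cleared (z w u₁ u₂ : ℂ) :
    sinh (z + u₁) * sinh (w + u₂) * sinh (u₁ - u₂) * sinh (z + w) =
      sinh (z + (u₁ - u₂)) * sinh ((z + w) + u₂) * sinh w * sinh u₁
        - sinh (w + (u₂ - u₁)) * sinh ((z + w) + u₁) * sinh z * sinh u₂ := by
  simp only [Complex.sinh, neg_add, neg_sub, exp_add, exp_sub, exp_neg]
  have := exp_ne_zero z
  have := exp_ne_zero w
  have := exp_ne_zero u₁
  have := exp_ne_zero u₂
  field_simp
  ring

theorem trig_fay_general (z w u₁ u₂ : ℂ)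
    (hz : sinh z ≠ 0) (hw : sinh w ≠ 0)
    (h1 : sinh u₁ ≠ 0) (h2 : sinh u₂ ≠ 0)
    (h12 : sinh (u₁ - u₂) ≠ 0)
    (hzw : sinh (z + w) ≠ 0) :
    (sinh (z + u₁) / (sinh z * sinh u₁)) * (sinh (w + u₂) / (sinh w * sinh u₂)) =
      (sinh (z + (u₁ - u₂)) / (sinh z * sinh (u₁ - u₂))) *
        (sinh ((z + w) + u₂) / (sinh (z + w) * sinh u₂))
      + (sinh (w + (u₂ - u₁)) / (sinh w * sinh (u₂ - u₁))) *
        (sinh ((z + w) + u₁) / (sinh (z + w) * sinh u₁)) := by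
  rw [show sinh (u₂ - u₁) = -sinh (u₁ - u₂) by rw [← sinh_neg, neg_sub]]
  field_simp
  linear_combination sinh_fay_cleared z w u₁ u₂

/-- The trigonometric Fay identity for `Φ(z,u) = sinh(z+u)/(sinh z · sinh u)`:
`Φ(z,u₁)Φ(w,u₂) = Φ(z,u₁−u₂)Φ(z+w,u₂) + Φ(w,u₂−u₁)Φ(z+w,u₁)`. -/
theorem trig_fay (z w u₁ u₂ : ℂ)
    (hz : sinh z ≠ 0) (hw : sinh w ≠ 0)
    (h1 : sinh u₁ ≠ 0) (h2 : sinh u₂ ≠ 0)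
    (h12 : sinh (u₁ - u₂) ≠ 0) (h21 : sinh (u₂ - u₁) ≠ 0)
    (hzw : sinh (z + w) ≠ 0) :
    (sinh (z + u₁) / (sinh z * sinh u₁)) * (sinh (w + u₂) / (sinh w * sinh u₂)) =
      (sinh (z + (u₁ - u₂)) / (sinh z * sinh (u₁ - u₂))) *
        (sinh ((z + w) + u₂) / (sinh (z + w) * sinh u₂))
      + (sinh (w + (u₂ - u₁)) / (sinh w * sinh (u₂ - u₁))) *
        (sinh ((z + w) + u₁) / (sinh (z + w) * sinh u₁)) :=
  trig_fay_general z w u₁ u₂ hz hw h1 h2 h12 hzw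
end

section
/- Action of the rank-1 determinant operator on monomial symmetric functions: with δ_j = N − j and Δ the Vandermonde determinant, one has Δ^{-1} det_{i,j}[x_i^{δ_j} θ_ω(u t^{δ_j} q^{x_i∂_i})] · m_λ = (1/|S_λ|) Σ_{π∈S_N} ∏_{i=1}^N θ_ω(u t^{δ_i} q^{π(λ)_i}) · s_{π(λ)}, where s_{π(λ)} denotes the (possibly zero or sign-adjusted) generalized Schur function Δ^{-1} det(x_i^{π(λ)_j + δ_j}). -/
open MvPolynomial

noncomputable section

/-- The theta function `θ_ω(y) = Σ_{n∈ℤ} ω^((n²−n)/2) (−y)^n`. -/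
def theta (ω y : ℂ) : ℂ := ∑' n : ℤ, ω ^ ((n ^ 2 - n) / 2).toNat * (-y) ^ n

/-- The monomial symmetric function `m_λ = |S_λ|⁻¹ Σ_{σ∈S_N} x^{σ(λ)}`. -/
def msym (N : ℕ) (lam : Fin N → ℕ) : MvPolynomial (Fin N) ℂ :=
  ((Fintype.card {σ : Equiv.Perm (Fin N) // lam ∘ σ = lam} : ℂ))⁻¹ •
    ∑ σ : Equiv.Perm (Fin N),
      monomial (Finsupp.equivFunOnFinite.symm (lam ∘ σ)) (1 : ℂ)

/-- The determinant operator `det_{ij}[x_i^{δ_j} θ_ω(u t^{δ_j} q^{x_i ∂_i})]`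
with `δ_j = N − j`, applied to a polynomial `p`; `q^{x_i∂_i}` acts on a monomial
`x^α` by multiplication by `q^{α_i}`. -/
def detOp (N : ℕ) (q t u ω : ℂ) (p : MvPolynomial (Fin N) ℂ) :
    MvPolynomial (Fin N) ℂ :=
  ∑ σ : Equiv.Perm (Fin N),
    (Equiv.Perm.sign σ : ℤ) •
      (AddMonoidAlgebra.coeff p).sum (fun α a =>
        (∏ i : Fin N, theta ω (u * t ^ (N - 1 - (σ i : ℕ)) * q ^ (α i))) •
          monomial (α + Finsupp.equivFunOnFinite.symm fun i : Fin N =>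
            N - 1 - (σ i : ℕ)) a)

/-!
`detOp` is additive and sends `x^β` to `Σ_σ sgn σ (∏_i θ_ω(u t^{δ_{σ i}} q^{β_i})) x^{β + δ∘σ}`.
On the orbit sum `m_λ = |S_λ|⁻¹ Σ_ρ x^{λ∘ρ}`, substituting `ρ = π σ` makes the θ-product depend
on `π` alone (reindex the product by `σ`), and the remaining signed sum over `σ` of
`x^{(λ∘π + δ)∘σ}` is the alternant `det(x_i^{λ_{π j} + δ_j})`.
-/

open Finset Equiv

/-- The exponents `δ_j = N - j` of the paper, with `j` counted from `1`. -/
def staircase (N : ℕ) (i : Fin N) : ℕ := N - 1 - i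

section

variable {N : ℕ} (q t u ω : ℂ)

lemma detOp_add (p p' : MvPolynomial (Fin N) ℂ) :
    detOp N q t u ω (p + p') = detOp N q t u ω p + detOp N q t u ω p' := by
  simp only [detOp, ← sum_add_distrib, ← smul_add, AddMonoidAlgebra.coeff_add]
  refine sum_congr rfl fun σ _ => ?_
  rw [Finsupp.sum_add_index' (by simp) fun _ _ _ => by simp only [map_add, smul_add]]

lemma detOp_sum {ι : Type*} (s : Finset ι) (p : ι → MvPolynomial (Fin N) ℂ) :
    detOp N q t u ω (∑ i ∈ s, p i) = ∑ i ∈ s, detOp N q t u ω (p i) :=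
  map_sum (AddMonoidHom.mk' (detOp N q t u ω) (detOp_add q t u ω)) p s

lemma detOp_monomial (β : Fin N → ℕ) (a : ℂ) :
    detOp N q t u ω (monomial (Finsupp.equivFunOnFinite.symm β) a) =
      ∑ σ : Perm (Fin N), (Perm.sign σ : ℤ) •
        (∏ i, theta ω (u * t ^ staircase N (σ i) * q ^ β i)) •
          monomial (Finsupp.equivFunOnFinite.symm (β + staircase N ∘ σ)) a := by
  simp only [detOp, ← single_eq_monomial, AddMonoidAlgebra.coeff_single]
  refine sum_congr rfl fun σ _ => ?_
  rw [Finsupp.sum_single_index (by simp)]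
  congr 3
  ext i
  simp [staircase]

end

lemma msym_eq_sum_monomial (N : ℕ) (lam : Fin N → ℕ) :
    msym N lam = ∑ σ : Perm (Fin N), monomial (Finsupp.equivFunOnFinite.symm (lam ∘ σ))
      ((Fintype.card {σ : Perm (Fin N) // lam ∘ σ = lam} : ℂ))⁻¹ := by
  simp only [msym, smul_sum, smul_monomial, smul_eq_mul, mul_one]

lemma det_of_X_pow {R n : Type*} [CommRing R] [Fintype n] [DecidableEq n] (μ : n → ℕ) :
    Matrix.det (Matrix.of fun i j : n => (X i : MvPolynomial n R) ^ μ j) =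
      ∑ σ : Perm n, (Perm.sign σ : ℤ) • monomial (Finsupp.equivFunOnFinite.symm (μ ∘ σ)) 1 := by
  rw [← Matrix.det_transpose, Matrix.det_apply]
  refine sum_congr rfl fun σ _ => ?_
  simp [monomial_eq, Finsupp.prod_fintype, Units.smul_def]

lemma detOp_msym (N : ℕ) (q t u ω : ℂ) (lam : Fin N → ℕ) :
    detOp N q t u ω (msym N lam) =
      ∑ π : Perm (Fin N), (∏ i, theta ω (u * t ^ staircase N i * q ^ lam (π i))) •
        ∑ σ : Perm (Fin N), (Perm.sign σ : ℤ) •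
          monomial (Finsupp.equivFunOnFinite.symm ((lam ∘ π + staircase N) ∘ σ))
            ((Fintype.card {σ : Perm (Fin N) // lam ∘ σ = lam} : ℂ))⁻¹ := by
  have theta_prod_comp (σ π : Perm (Fin N)) :
      ∏ i, theta ω (u * t ^ staircase N (σ i) * q ^ lam (π (σ i))) =
        ∏ i, theta ω (u * t ^ staircase N i * q ^ lam (π i)) :=
    Equiv.prod_comp σ fun i => theta ω (u * t ^ staircase N i * q ^ lam (π i))
  rw [msym_eq_sum_monomial, detOp_sum]
  simp_rw [detOp_monomial]
  -- write the orbit permutation as `π * σ`, with `σ` the permutation of the determinant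
  rw [sum_comm]
  conv_lhs => enter [2, σ]; rw [← Equiv.sum_comp (Equiv.mulRight σ)]
  simp_rw [Equiv.coe_mulRight, Perm.coe_mul, Function.comp_apply, theta_prod_comp, smul_sum]
  rw [sum_comm]
  exact sum_congr rfl fun π _ => sum_congr rfl fun σ _ => smul_comm _ _ _

theorem dell_detOp_on_msym_general (N : ℕ) (q t u ω : ℂ)
    (lam : Fin N → ℕ) :
    detOp N q t u ω (msym N lam) =
      ((Fintype.card {σ : Equiv.Perm (Fin N) // lam ∘ σ = lam} : ℂ))⁻¹ •
        ∑ π : Equiv.Perm (Fin N),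
          (∏ i : Fin N, theta ω (u * t ^ (N - 1 - (i : ℕ)) * q ^ lam (π i))) •
            Matrix.det (Matrix.of fun i j : Fin N =>
              (X i : MvPolynomial (Fin N) ℂ) ^ (lam (π j) + (N - 1 - (j : ℕ)))) := by
  set c : ℂ := ((Fintype.card {σ : Perm (Fin N) // lam ∘ σ = lam} : ℂ))⁻¹
  rw [detOp_msym, smul_sum]
  refine sum_congr rfl fun π _ => ?_
  rw [det_of_X_pow, smul_smul, mul_comm c, ← smul_smul, smul_sum (r := c)]
  congr 1
  refine sum_congr rfl fun σ _ => ?_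
  rw [smul_comm c, smul_monomial c, smul_eq_mul, mul_one]
  rfl

/-- Action of the determinant operator on monomial symmetric functions:
`det[x_i^{δ_j} θ_ω(u t^{δ_j} q^{x_i∂_i})] m_λ
  = |S_λ|⁻¹ Σ_{π∈S_N} (∏_i θ_ω(u t^{δ_i} q^{λ_{π(i)}})) det(x_i^{λ_{π(j)}+δ_j})`,
i.e. the identity `Ô m_λ = |S_λ|⁻¹ Σ_π (∏_i θ_ω(u t^{δ_i} q^{π(λ)_i})) s_{π(λ)}`
multiplied through by the Vandermonde determinant `Δ`, where
`s_{π(λ)} = Δ⁻¹ det(x_i^{π(λ)_j + δ_j})`. -/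
theorem dell_detOp_on_msym (N : ℕ) (q t u ω : ℂ)
    (lam : Fin N → ℕ) (hlam : Antitone lam) :
    detOp N q t u ω (msym N lam) =
      ((Fintype.card {σ : Equiv.Perm (Fin N) // lam ∘ σ = lam} : ℂ))⁻¹ •
        ∑ π : Equiv.Perm (Fin N),
          (∏ i : Fin N, theta ω (u * t ^ (N - 1 - (i : ℕ)) * q ^ lam (π i))) •
            Matrix.det (Matrix.of fun i j : Fin N =>
              (X i : MvPolynomial (Fin N) ℂ) ^ (lam (π j) + (N - 1 - (j : ℕ)))) :=
  dell_detOp_on_msym_general N q t u ω lam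
end
end
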